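/- Let H be a connected hypergraph and suppose (H, f) is a hard pair for a vector function f = (f_1, …, f_p). If u and u' are two distinct non-separating vertices of H contained in the same block of H, then either f(u) = f(u'), or f_i(u) = f_i(u') = 0 for all but one index i ∈ {1, …, p}. -/

import Mathlib

/-- A hypergraph with vertices and edge labels drawn from ℕ. -/
structure NatHypergraph where
  V : Finset ℕ
  E : Finset ℕ
  inc : ℕ → Finset ℕ
  inc_sub : ∀ e ∈ E, inc e ⊆ V
  inc_card : ∀ e ∈ E, 2 ≤ (inc e).card

namespace NatHypergraph

/-- Degree of a vertex. -/
def deg (H : NatHypergraph) (v : ℕ) : ℕ := (H.E.filter (fun e => v ∈ H.inc e)).card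

/-- `G` is a subhypergraph of `H`. -/
def IsSub (G H : NatHypergraph) : Prop :=
  G.V ⊆ H.V ∧ G.E ⊆ H.E ∧ ∀ e ∈ G.E, G.inc e = H.inc e

/-- The subhypergraph induced by a vertex set `X`. -/
def induce (H : NatHypergraph) (X : Finset ℕ) : NatHypergraph where
  V := X ∩ H.V
  E := H.E.filter (fun e => H.inc e ⊆ X)
  inc := H.inc
  inc_sub := fun e he => by
    have h := Finset.mem_filter.mp he
    exact Finset.subset_inter h.2 (H.inc_sub e h.1)
  inc_card := fun e he => H.inc_card e (Finset.mem_filter.mp he).1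

/-- The hypergraph obtained by shrinking `H` to `X`. -/
def shrink (H : NatHypergraph) (X : Finset ℕ) : NatHypergraph where
  V := X ∩ H.V
  E := H.E.filter (fun e => 2 ≤ (H.inc e ∩ X).card)
  inc := fun e => H.inc e ∩ X
  inc_sub := fun e he => by
    have h := Finset.mem_filter.mp he
    intro v hv
    have hv' := Finset.mem_inter.mp hv
    exact Finset.mem_inter.mpr ⟨hv'.2, H.inc_sub e h.1 hv'.1⟩
  inc_card := fun e he => (Finset.mem_filter.mp he).2

/-- `H ÷ v`: shrinking `H` to `V(H) \ {v}`. -/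
def shrinkDel (H : NatHypergraph) (v : ℕ) : NatHypergraph := H.shrink (H.V.erase v)

/-- `H - X`: deleting a vertex set. -/
def delete (H : NatHypergraph) (X : Finset ℕ) : NatHypergraph := H.induce (H.V \ X)

/-- Multiplicity: number of ordinary edges with incidence set exactly `{u,v}`. -/
def mult (H : NatHypergraph) (u v : ℕ) : ℕ :=
  (H.E.filter (fun e => H.inc e = {u, v})).card

/-- Connectedness. -/
def Connected (H : NatHypergraph) : Prop :=
  H.V.Nonempty ∧ ∀ X ⊆ H.V, X.Nonempty → X ≠ H.V →
    ∃ e ∈ H.E, (H.inc e ∩ X).Nonempty ∧ (H.inc e \ X).Nonempty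

/-- `H` is strictly `h`-degenerate. -/
def StrictlyDeg (H : NatHypergraph) (h : ℕ → ℕ) : Prop :=
  ∀ G : NatHypergraph, G.IsSub H → G.V.Nonempty → ∃ v ∈ G.V, G.deg v < h v

/-- `P` describes a `p`-partition of the vertex set of `H`. -/
def IsPartition (H : NatHypergraph) {p : ℕ} (P : Fin p → Finset ℕ) : Prop :=
  (∀ i, P i ⊆ H.V) ∧ (∀ i j, i ≠ j → Disjoint (P i) (P j)) ∧
    ∀ v ∈ H.V, ∃ i, v ∈ P i

/-- `P` describes an `f`-partition of `H`. -/
def IsFPartition (H : NatHypergraph) {p : ℕ} (f : Fin p → ℕ → ℕ)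
    (P : Fin p → Finset ℕ) : Prop :=
  H.IsPartition P ∧ ∀ i, (H.induce (P i)).StrictlyDeg (f i)

/-- `H` admits an `f`-partition. -/
def Partitionable (H : NatHypergraph) {p : ℕ} (f : Fin p → ℕ → ℕ) : Prop :=
  ∃ P : Fin p → Finset ℕ, H.IsFPartition f P

/-- `v` is a separating vertex of `H`. -/
def Separating (H : NatHypergraph) (v : ℕ) : Prop :=
  ∃ X₁ X₂ : Finset ℕ, X₁ ∪ X₂ = H.V ∧ X₁ ∩ X₂ = {v} ∧
    2 ≤ X₁.card ∧ 2 ≤ X₂.card ∧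
    ∀ e ∈ H.E, H.inc e ⊆ X₁ ∨ H.inc e ⊆ X₂

/-- `H` is (equal to) `tKₙ`: the complete graph on `n` vertices with each
edge replaced by `t` parallel edges. -/
def IsTimesComplete (H : NatHypergraph) (t n : ℕ) : Prop :=
  H.V.card = n ∧ (∀ e ∈ H.E, (H.inc e).card = 2) ∧
    ∀ u ∈ H.V, ∀ v ∈ H.V, u ≠ v → H.mult u v = t

/-- `H` is (equal to) `tCₙ`: the cycle of length `n` with each edge replaced
by `t` parallel edges. -/
def IsTimesCycle (H : NatHypergraph) (t n : ℕ) : Prop :=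
  3 ≤ n ∧ ∃ c : ℕ → ℕ,
    (∀ k l, k < n → l < n → c k = c l → k = l) ∧
    H.V = (Finset.range n).image c ∧
    (∀ e ∈ H.E, (H.inc e).card = 2) ∧
    (∀ k < n, H.mult (c k) (c ((k + 1) % n)) = t) ∧
    (∀ e ∈ H.E, ∃ k < n, H.inc e = {c k, c ((k + 1) % n)})

/-- Maximum degree. -/
def maxDeg (H : NatHypergraph) : ℕ := H.V.sup H.deg

/-- Coloring number: the least `k` such that `H` is strictly `k`-degenerate. -/
noncomputable def colNum (H : NatHypergraph) : ℕ :=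
  sInf {k : ℕ | H.StrictlyDeg (fun _ => k)}

end NatHypergraph
/-- `H` is obtained from `H₁` and `H₂` by merging `v₁` and `v₂` to `vs`. -/
def NatHypergraph.IsMergeOf (H H₁ H₂ : NatHypergraph) (v₁ v₂ vs : ℕ) : Prop :=
  Disjoint H₁.V H₂.V ∧ Disjoint H₁.E H₂.E ∧ v₁ ∈ H₁.V ∧ v₂ ∈ H₂.V ∧
    vs ∉ (H₁.V ∪ H₂.V) \ {v₁, v₂} ∧
    H.V = insert vs ((H₁.V ∪ H₂.V) \ {v₁, v₂}) ∧
    H.E = H₁.E ∪ H₂.E ∧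
    (∀ e ∈ H₁.E, H.inc e =
      if v₁ ∈ H₁.inc e then insert vs (H₁.inc e \ {v₁}) else H₁.inc e) ∧
    (∀ e ∈ H₂.E, H.inc e =
      if v₂ ∈ H₂.inc e then insert vs (H₂.inc e \ {v₂}) else H₂.inc e)

/-- The recursively defined family of hard pairs. -/
inductive NatHypergraph.HardPair (p : ℕ) : NatHypergraph → (Fin p → ℕ → ℕ) → Prop where
  | mono (H : NatHypergraph) (f : Fin p → ℕ → ℕ) (j : Fin p) :
      H.Connected → (¬ ∃ v, H.Separating v) →
      (∀ v ∈ H.V, f j v = H.deg v) →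
      (∀ i, i ≠ j → ∀ v ∈ H.V, f i v = 0) →
      NatHypergraph.HardPair p H f
  | complete (H : NatHypergraph) (f : Fin p → ℕ → ℕ) (t n : ℕ) (nn : Fin p → ℕ) :
      1 ≤ t → 3 ≤ n → H.IsTimesComplete t n → H.Connected →
      (∃ i j, i ≠ j ∧ nn i ≠ 0 ∧ nn j ≠ 0) →
      (∑ i, nn i) = n - 1 →
      (∀ i, ∀ v ∈ H.V, f i v = t * nn i) →
      NatHypergraph.HardPair p H f
  | cycle (H : NatHypergraph) (f : Fin p → ℕ → ℕ) (t n : ℕ) (k l : Fin p) :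
      1 ≤ t → 5 ≤ n → Odd n → H.IsTimesCycle t n → H.Connected → k ≠ l →
      (∀ v ∈ H.V, f k v = t ∧ f l v = t) →
      (∀ i, i ≠ k → i ≠ l → ∀ v ∈ H.V, f i v = 0) →
      NatHypergraph.HardPair p H f
  | merge (H H₁ H₂ : NatHypergraph) (f f₁ f₂ : Fin p → ℕ → ℕ) (v₁ v₂ vs : ℕ) :
      NatHypergraph.HardPair p H₁ f₁ → NatHypergraph.HardPair p H₂ f₂ →
      H.IsMergeOf H₁ H₂ v₁ v₂ vs →
      (∀ i, f i vs = f₁ i v₁ + f₂ i v₂) →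
      (∀ i, ∀ v ∈ H₁.V, v ≠ v₁ → f i v = f₁ i v) →
      (∀ i, ∀ v ∈ H₂.V, v ≠ v₂ → f i v = f₂ i v) →
      NatHypergraph.HardPair p H f

/-- `B` is a block of `H`: a maximal connected subhypergraph without a
separating vertex. -/
def NatHypergraph.IsBlockOf (B H : NatHypergraph) : Prop :=
  B.IsSub H ∧ B.Connected ∧ (¬ ∃ v, B.Separating v) ∧
    ∀ B' : NatHypergraph, B'.IsSub H → B'.Connected →
      (¬ ∃ v, B'.Separating v) → B.IsSub B' → B'.V = B.V ∧ B'.E = B.E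


section Aux

open Finset

namespace HPAux

/-- swap image when `a ∈ s`, `b ∉ s`. -/
lemma image_swap_of_mem_not_mem {a b : ℕ} {s : Finset ℕ} (ha : a ∈ s) (hb : b ∉ s) :
    s.image (Equiv.swap a b) = insert b (s.erase a) := by
  have hab : a ≠ b := fun h => hb (h ▸ ha)
  ext x
  simp only [Finset.mem_image, Finset.mem_insert, Finset.mem_erase]
  constructor
  · rintro ⟨y, hy, rfl⟩
    rcases eq_or_ne y a with rfl | hya
    · left; simp
    · have hyb : y ≠ b := fun h => hb (h ▸ hy)
      rw [Equiv.swap_apply_of_ne_of_ne hya hyb]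
      exact Or.inr ⟨hya, hy⟩
  · rintro (rfl | ⟨hxa, hxs⟩)
    · exact ⟨a, ha, by simp⟩
    · have hxb : x ≠ b := fun h => hb (h ▸ hxs)
      exact ⟨x, hxs, Equiv.swap_apply_of_ne_of_ne hxa hxb⟩

lemma image_swap_of_not_mem_not_mem {a b : ℕ} {s : Finset ℕ} (ha : a ∉ s) (hb : b ∉ s) :
    s.image (Equiv.swap a b) = s := by
  have : ∀ y ∈ s, Equiv.swap a b y = y := fun y hy =>
    Equiv.swap_apply_of_ne_of_ne (fun h => ha (h ▸ hy)) (fun h => hb (h ▸ hy))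
  calc s.image (Equiv.swap a b) = s.image id := Finset.image_congr
        (fun y hy => this y hy)
    _ = s := Finset.image_id

lemma image_swap_insert_erase {a b : ℕ} {s : Finset ℕ} (ha : a ∈ s) (h : b ∈ s → b = a) :
    s.image (Equiv.swap a b) = insert b (s.erase a) := by
  by_cases hb : b ∈ s
  · have hba : b = a := h hb
    subst hba
    rw [Equiv.swap_self]
    simp only [Equiv.coe_refl, Finset.image_id]
    rw [Finset.insert_erase ha]
  · exact image_swap_of_mem_not_mem ha hb

lemma swap_swap_image (a b : ℕ) (s : Finset ℕ) :
    (s.image (Equiv.swap a b)).image (Equiv.swap a b) = s := by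
  rw [Finset.image_image]
  have : (⇑(Equiv.swap a b) ∘ ⇑(Equiv.swap a b)) = id :=
    funext fun x => Equiv.swap_apply_self a b x
  rw [this, Finset.image_id]

/-- Relabeling a hypergraph along a permutation of ℕ. -/
def relabel (σ : ℕ ≃ ℕ) (G : NatHypergraph) : NatHypergraph where
  V := G.V.image σ
  E := G.E
  inc := fun e => (G.inc e).image σ
  inc_sub := fun e he => Finset.image_subset_image (G.inc_sub e he)
  inc_card := fun e he => by
    rw [Finset.card_image_of_injective _ σ.injective]; exact G.inc_card e he

lemma relabel_connected (σ : ℕ ≃ ℕ) (G : NatHypergraph) (h : G.Connected) :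
    (relabel σ G).Connected := by
  obtain ⟨hne, hcon⟩ := h
  refine ⟨hne.image _, fun X hX hXne hXV => ?_⟩
  have hsymm : ∀ s : Finset ℕ, (s.image ⇑σ).image ⇑σ.symm = s := fun s => by
    rw [Finset.image_image]
    have : (⇑σ.symm ∘ ⇑σ) = id := funext fun x => σ.symm_apply_apply x
    rw [this, Finset.image_id]
  have hsymm' : ∀ s : Finset ℕ, (s.image ⇑σ.symm).image ⇑σ = s := fun s => by
    rw [Finset.image_image]
    have : (⇑σ ∘ ⇑σ.symm) = id := funext fun x => σ.apply_symm_apply x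
    rw [this, Finset.image_id]
  have hX' : X.image ⇑σ.symm ⊆ G.V := by
    intro x hx
    obtain ⟨y, hy, rfl⟩ := Finset.mem_image.mp hx
    obtain ⟨z, hz, hzy⟩ := Finset.mem_image.mp (hX hy)
    rwa [← hzy, σ.symm_apply_apply]
  have hX'ne : (X.image ⇑σ.symm).Nonempty := hXne.image _
  have hX'V : X.image ⇑σ.symm ≠ G.V := by
    intro hEq
    apply hXV
    rw [← hsymm' X, hEq]
    rfl
  obtain ⟨e, he, ⟨a, ha⟩, ⟨b, hb⟩⟩ := hcon _ hX' hX'ne hX'V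
  refine ⟨e, he, ⟨σ a, ?_⟩, ⟨σ b, ?_⟩⟩
  · rcases Finset.mem_inter.mp ha with ⟨ha1, ha2⟩
    refine Finset.mem_inter.mpr ⟨Finset.mem_image_of_mem _ ha1, ?_⟩
    obtain ⟨z, hz, rfl⟩ := Finset.mem_image.mp ha2
    rwa [σ.apply_symm_apply]
  · rcases Finset.mem_sdiff.mp hb with ⟨hb1, hb2⟩
    refine Finset.mem_sdiff.mpr ⟨Finset.mem_image_of_mem _ hb1, ?_⟩
    intro hmem
    exact hb2 (Finset.mem_image.mpr ⟨σ b, hmem, σ.symm_apply_apply b⟩)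

lemma relabel_sep (σ : ℕ ≃ ℕ) (G : NatHypergraph) (w : ℕ)
    (h : (relabel σ G).Separating w) : G.Separating (σ.symm w) := by
  obtain ⟨X₁, X₂, hun, hint, hc₁, hc₂, hed⟩ := h
  have hinj : Function.Injective ⇑σ.symm := σ.symm.injective
  refine ⟨X₁.image ⇑σ.symm, X₂.image ⇑σ.symm, ?_, ?_, ?_, ?_, ?_⟩
  · rw [← Finset.image_union, hun]
    show ((G.V.image ⇑σ).image ⇑σ.symm) = G.V
    rw [Finset.image_image]
    have : (⇑σ.symm ∘ ⇑σ) = id := funext fun x => σ.symm_apply_apply x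
    rw [this, Finset.image_id]
  · rw [← Finset.image_inter _ _ hinj, hint, Finset.image_singleton]
  · rwa [Finset.card_image_of_injective _ hinj]
  · rwa [Finset.card_image_of_injective _ hinj]
  · intro e he
    rcases hed e he with h1 | h1
    · left
      intro x hx
      have : σ x ∈ (G.inc e).image ⇑σ := Finset.mem_image_of_mem _ hx
      have := h1 this
      have h2 : σ.symm (σ x) ∈ X₁.image ⇑σ.symm := Finset.mem_image_of_mem _ this
      rwa [σ.symm_apply_apply] at h2
    · right
      intro x hx
      have : σ x ∈ (G.inc e).image ⇑σ := Finset.mem_image_of_mem _ hx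
      have := h1 this
      have h2 : σ.symm (σ x) ∈ X₂.image ⇑σ.symm := Finset.mem_image_of_mem _ this
      rwa [σ.symm_apply_apply] at h2

/-- A hard pair on a single vertex has zero `f`. -/
lemma mergeOf_symm {H H₁ H₂ : NatHypergraph} {v₁ v₂ vs : ℕ}
    (hm : H.IsMergeOf H₁ H₂ v₁ v₂ vs) : H.IsMergeOf H₂ H₁ v₂ v₁ vs := by
  obtain ⟨hdV, hdE, hv₁, hv₂, hvs, hV, hE, hinc₁, hinc₂⟩ := hm
  have hpair : ({v₂, v₁} : Finset ℕ) = {v₁, v₂} := Finset.pair_comm v₂ v₁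
  refine ⟨hdV.symm, hdE.symm, hv₂, hv₁, ?_, ?_, ?_, hinc₂, hinc₁⟩
  · rwa [Finset.union_comm, hpair]
  · rwa [Finset.union_comm, hpair]
  · rwa [Finset.union_comm]

section Merge

variable {H H₁ H₂ : NatHypergraph} {v₁ v₂ vs : ℕ}
  (hm : H.IsMergeOf H₁ H₂ v₁ v₂ vs)

/-- vs is in V₁ only if it equals v₁. -/
lemma vs_mem_V₁ (hm : H.IsMergeOf H₁ H₂ v₁ v₂ vs) : vs ∈ H₁.V → vs = v₁ := by
  obtain ⟨hdV, hdE, hv₁, hv₂, hvs, hV, hE, hinc₁, hinc₂⟩ := hm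
  intro hmem
  by_contra hne
  have h1 : vs ∈ (H₁.V ∪ H₂.V) \ {v₁, v₂} := by
    refine Finset.mem_sdiff.mpr ⟨Finset.mem_union_left _ hmem, ?_⟩
    intro hc
    rcases Finset.mem_insert.mp hc with h | h
    · exact hne h
    · rw [Finset.mem_singleton] at h
      subst h
      exact (Finset.disjoint_left.mp hdV hmem) hv₂
  exact hvs h1

lemma hv_eq (hm : H.IsMergeOf H₁ H₂ v₁ v₂ vs) :
    H.V = insert vs (H₁.V.erase v₁ ∪ H₂.V.erase v₂) := by
  obtain ⟨hdV, hdE, hv₁, hv₂, hvs, hV, hE, hinc₁, hinc₂⟩ := hm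
  have hv₁2 : v₁ ∉ H₂.V := Finset.disjoint_left.mp hdV hv₁
  have hv₂1 : v₂ ∉ H₁.V := Finset.disjoint_right.mp hdV hv₂
  rw [hV]
  congr 1
  ext x
  simp only [Finset.mem_sdiff, Finset.mem_union, Finset.mem_erase,
    Finset.mem_insert, Finset.mem_singleton]
  constructor
  · rintro ⟨h1 | h1, h2⟩
    · exact Or.inl ⟨fun h => h2 (Or.inl h), h1⟩
    · exact Or.inr ⟨fun h => h2 (Or.inr h), h1⟩
  · rintro (⟨h1, h2⟩ | ⟨h1, h2⟩)
    · refine ⟨Or.inl h2, fun hc => ?_⟩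
      rcases hc with h | h
      · exact h1 h
      · exact hv₂1 (h ▸ h2)
    · refine ⟨Or.inr h2, fun hc => ?_⟩
      rcases hc with h | h
      · exact hv₁2 (h ▸ h2)
      · exact h1 h

lemma inc_eq_image (hm : H.IsMergeOf H₁ H₂ v₁ v₂ vs) {e : ℕ} (he : e ∈ H₁.E) :
    H.inc e = (H₁.inc e).image (Equiv.swap v₁ vs) := by
  have key := hm.2.2.2.2.2.2.2.1 e he
  have hvs_not : vs ∈ H₁.inc e → vs = v₁ := fun h =>
    vs_mem_V₁ hm (H₁.inc_sub e he h)
  rw [key]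
  by_cases hmem : v₁ ∈ H₁.inc e
  · simp only [hmem, if_true]
    rw [image_swap_insert_erase hmem hvs_not, Finset.erase_eq]
  · simp only [hmem, if_false]
    rw [image_swap_of_not_mem_not_mem hmem (fun h => hmem ((hvs_not h) ▸ h))]

lemma image_V₁ (hm : H.IsMergeOf H₁ H₂ v₁ v₂ vs) :
    H₁.V.image (Equiv.swap v₁ vs) = insert vs (H₁.V.erase v₁) := by
  exact image_swap_insert_erase hm.2.2.1 (vs_mem_V₁ hm)

lemma inc_sub_W₂ (hm : H.IsMergeOf H₁ H₂ v₁ v₂ vs) {e : ℕ} (he : e ∈ H₂.E) :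
    H.inc e ⊆ insert vs (H₂.V.erase v₂) := by
  have key := hm.2.2.2.2.2.2.2.2 e he
  have hsub := H₂.inc_sub e he
  rw [key]
  by_cases hmem : v₂ ∈ H₂.inc e
  · simp only [hmem, if_true]
    intro x hx
    rcases Finset.mem_insert.mp hx with rfl | hx
    · exact Finset.mem_insert_self _ _
    · rcases Finset.mem_sdiff.mp hx with ⟨h1, h2⟩
      rw [Finset.mem_singleton] at h2
      exact Finset.mem_insert_of_mem (Finset.mem_erase.mpr ⟨h2, hsub h1⟩)
  · simp only [hmem, if_false]
    intro x hx
    exact Finset.mem_insert_of_mem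
      (Finset.mem_erase.mpr ⟨fun h => hmem (h ▸ hx), hsub hx⟩)

lemma W₁_W₂_inter (hm : H.IsMergeOf H₁ H₂ v₁ v₂ vs) {x : ℕ}
    (h1 : x ∈ insert vs (H₁.V.erase v₁)) (h2 : x ∈ insert vs (H₂.V.erase v₂)) :
    x = vs := by
  rcases Finset.mem_insert.mp h1 with rfl | h1
  · rfl
  rcases Finset.mem_insert.mp h2 with rfl | h2
  · rfl
  exact absurd (Finset.mem_erase.mp h2).2
    (Finset.disjoint_left.mp hm.1 ((Finset.mem_erase.mp h1).2))

lemma union_W (hm : H.IsMergeOf H₁ H₂ v₁ v₂ vs) :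
    insert vs (H₁.V.erase v₁) ∪ insert vs (H₂.V.erase v₂) = H.V := by
  rw [hv_eq hm]
  ext x
  simp only [Finset.mem_union, Finset.mem_insert]
  tauto

lemma sep_transfer_aux (hm : H.IsMergeOf H₁ H₂ v₁ v₂ vs) {w : ℕ} {Y₁ Y₂ : Finset ℕ}
    (hun : Y₁ ∪ Y₂ = H₁.V) (hint : Y₁ ∩ Y₂ = {w})
    (hc₁ : 2 ≤ Y₁.card) (hc₂ : 2 ≤ Y₂.card)
    (hed : ∀ e ∈ H₁.E, H₁.inc e ⊆ Y₁ ∨ H₁.inc e ⊆ Y₂)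
    (hv : v₁ ∈ Y₂) : H.Separating (Equiv.swap v₁ vs w) := by
  have hY₁sub : Y₁ ⊆ H₁.V := hun ▸ Finset.subset_union_left
  have hvsX₂ : vs ∈ Y₂.image (Equiv.swap v₁ vs) :=
    Finset.mem_image.mpr ⟨v₁, hv, Equiv.swap_apply_left _ _⟩
  refine ⟨Y₁.image (Equiv.swap v₁ vs), Y₂.image (Equiv.swap v₁ vs) ∪ H₂.V.erase v₂,
    ?_, ?_, ?_, ?_, ?_⟩
  · rw [← Finset.union_assoc, ← Finset.image_union, hun, image_V₁ hm,
      Finset.insert_union, ← hv_eq hm]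
  · rw [Finset.inter_union_distrib_left, ← Finset.image_inter _ _ (Equiv.swap v₁ vs).injective,
      hint, Finset.image_singleton]
    have hempty : Y₁.image (Equiv.swap v₁ vs) ∩ H₂.V.erase v₂ = ∅ := by
      rw [Finset.eq_empty_iff_forall_notMem]
      intro x hx
      rcases Finset.mem_inter.mp hx with ⟨hx1, hx2⟩
      have hxW₁ : x ∈ insert vs (H₁.V.erase v₁) := by
        rw [← image_V₁ hm]
        exact Finset.image_subset_image hY₁sub hx1
      rcases Finset.mem_erase.mp hx2 with ⟨hxv₂, hxV₂⟩
      rcases Finset.mem_insert.mp hxW₁ with rfl | hx3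
      · exact hxv₂ (vs_mem_V₁ (mergeOf_symm hm) hxV₂)
      · exact Finset.disjoint_left.mp hm.1 (Finset.mem_erase.mp hx3).2 hxV₂
    rw [hempty, Finset.union_empty]
  · rwa [Finset.card_image_of_injective _ (Equiv.swap v₁ vs).injective]
  · calc 2 ≤ Y₂.card := hc₂
      _ = (Y₂.image (Equiv.swap v₁ vs)).card :=
        (Finset.card_image_of_injective _ (Equiv.swap v₁ vs).injective).symm
      _ ≤ _ := Finset.card_le_card Finset.subset_union_left
  · intro e he
    have heE : e ∈ H₁.E ∪ H₂.E := hm.2.2.2.2.2.2.1 ▸ he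
    rcases Finset.mem_union.mp heE with he1 | he2
    · rcases hed e he1 with hsub | hsub
      · left
        rw [inc_eq_image hm he1]
        exact Finset.image_subset_image hsub
      · right
        rw [inc_eq_image hm he1]
        exact (Finset.image_subset_image hsub).trans Finset.subset_union_left
    · right
      intro x hx
      rcases Finset.mem_insert.mp (inc_sub_W₂ hm he2 hx) with rfl | hx2
      · exact Finset.mem_union_left _ hvsX₂
      · exact Finset.mem_union_right _ hx2

/-- Transfer of separating vertices from H₁ to H. -/
lemma sep_transfer (hm : H.IsMergeOf H₁ H₂ v₁ v₂ vs) {w : ℕ}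
    (h : H₁.Separating w) : H.Separating (Equiv.swap v₁ vs w) := by
  obtain ⟨Y₁, Y₂, hun, hint, hc₁, hc₂, hed⟩ := h
  have hv₁mem : v₁ ∈ Y₁ ∪ Y₂ := hun ▸ hm.2.2.1
  by_cases hv : v₁ ∈ Y₂
  · exact sep_transfer_aux hm hun hint hc₁ hc₂ hed hv
  · have hv' : v₁ ∈ Y₁ := by
      rcases Finset.mem_union.mp hv₁mem with h | h
      · exact h
      · exact absurd h hv
    have hint' : Y₂ ∩ Y₁ = {w} := by rwa [Finset.inter_comm]
    have hun' : Y₂ ∪ Y₁ = H₁.V := by rwa [Finset.union_comm]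
    exact sep_transfer_aux hm hun' hint' hc₂ hc₁
      (fun e he => (hed e he).symm) hv' 

/-- vs separates H when both sides are nontrivial. -/
lemma vs_separating (hm : H.IsMergeOf H₁ H₂ v₁ v₂ vs)
    (h1 : 2 ≤ H₁.V.card) (h2 : 2 ≤ H₂.V.card) : H.Separating vs := by
  have hvs1 : vs ∉ H₁.V.erase v₁ := fun h =>
    (Finset.mem_erase.mp h).1 (vs_mem_V₁ hm (Finset.mem_erase.mp h).2)
  have hvs2 : vs ∉ H₂.V.erase v₂ := fun h =>
    (Finset.mem_erase.mp h).1 (vs_mem_V₁ (mergeOf_symm hm) (Finset.mem_erase.mp h).2)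
  refine ⟨insert vs (H₁.V.erase v₁), insert vs (H₂.V.erase v₂), union_W hm, ?_, ?_, ?_, ?_⟩
  · apply Finset.Subset.antisymm
    · intro x hx
      rcases Finset.mem_inter.mp hx with ⟨ha, hb⟩
      exact Finset.mem_singleton.mpr (W₁_W₂_inter hm ha hb)
    · intro x hx
      rw [Finset.mem_singleton] at hx
      subst hx
      exact Finset.mem_inter.mpr ⟨Finset.mem_insert_self _ _, Finset.mem_insert_self _ _⟩
  · rw [Finset.card_insert_of_notMem hvs1, Finset.card_erase_of_mem hm.2.2.1]
    omega
  · rw [Finset.card_insert_of_notMem hvs2, Finset.card_erase_of_mem hm.2.2.2.1]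
    omega
  · intro e he
    have heE : e ∈ H₁.E ∪ H₂.E := hm.2.2.2.2.2.2.1 ▸ he
    rcases Finset.mem_union.mp heE with he1 | he2
    · left
      rw [inc_eq_image hm he1, ← image_V₁ hm]
      exact Finset.image_subset_image (H₁.inc_sub e he1)
    · right
      exact inc_sub_W₂ hm he2

/-- A connected sub with no separating vertex lies on one side of the merge. -/
lemma side_of (hm : H.IsMergeOf H₁ H₂ v₁ v₂ vs) (B : NatHypergraph)
    (hsub : B.IsSub H) (hconn : B.Connected) (hnosep : ¬ ∃ v, B.Separating v) :
    B.V ⊆ insert vs (H₁.V.erase v₁) ∨ B.V ⊆ insert vs (H₂.V.erase v₂) := by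
  set W₁ := insert vs (H₁.V.erase v₁) with hW₁
  set W₂ := insert vs (H₂.V.erase v₂) with hW₂
  by_contra hcon
  push_neg at hcon
  obtain ⟨⟨x, hxB, hxW₁⟩, ⟨y, hyB, hyW₂⟩⟩ :
      (∃ x ∈ B.V, x ∉ W₁) ∧ (∃ y ∈ B.V, y ∉ W₂) := by
    constructor
    · by_contra h; push_neg at h; exact hcon.1 h
    · by_contra h; push_neg at h; exact hcon.2 h
  have hBV : B.V ⊆ H.V := hsub.1
  have hHV : W₁ ∪ W₂ = H.V := union_W hm
  have hxW₂ : x ∈ W₂ := by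
    have := hBV hxB
    rw [← hHV] at this
    rcases Finset.mem_union.mp this with h | h
    · exact absurd h hxW₁
    · exact h
  have hyW₁ : y ∈ W₁ := by
    have := hBV hyB
    rw [← hHV] at this
    rcases Finset.mem_union.mp this with h | h
    · exact h
    · exact absurd h hyW₂
  have hxvs : x ≠ vs := fun h => hxW₁ (h ▸ Finset.mem_insert_self _ _)
  have hyvs : y ≠ vs := fun h => hyW₂ (h ▸ Finset.mem_insert_self _ _)
  -- every edge of B lies within W₁ or within W₂
  have hedge : ∀ e ∈ B.E, (B.inc e ⊆ W₁ ∧ e ∈ H₁.E) ∨ (B.inc e ⊆ W₂ ∧ e ∈ H₂.E) := by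
    intro e he
    have heH : e ∈ H.E := hsub.2.1 he
    have hinc : B.inc e = H.inc e := hsub.2.2 e he
    have heE : e ∈ H₁.E ∪ H₂.E := hm.2.2.2.2.2.2.1 ▸ heH
    rcases Finset.mem_union.mp heE with he1 | he2
    · left
      refine ⟨?_, he1⟩
      rw [hinc, inc_eq_image hm he1, hW₁, ← image_V₁ hm]
      exact Finset.image_subset_image (H₁.inc_sub e he1)
    · right
      exact ⟨hinc ▸ inc_sub_W₂ hm he2, he2⟩
  -- vs ∈ B.V
  have hvsB : vs ∈ B.V := by
    set X := B.V ∩ (W₁.erase vs) with hX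
    have hXsub : X ⊆ B.V := Finset.inter_subset_left
    have hXne : X.Nonempty := ⟨y, Finset.mem_inter.mpr ⟨hyB,
      Finset.mem_erase.mpr ⟨hyvs, hyW₁⟩⟩⟩
    have hXneq : X ≠ B.V := by
      intro h
      have : x ∈ X := h ▸ hxB
      exact hxW₁ (Finset.mem_erase.mp (Finset.mem_inter.mp this).2).2
    obtain ⟨e, he, ⟨a, ha⟩, ⟨b, hb⟩⟩ := hconn.2 X hXsub hXne hXneq
    rcases Finset.mem_inter.mp ha with ⟨ha1, ha2⟩
    rcases Finset.mem_sdiff.mp hb with ⟨hb1, hb2⟩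
    have hincB : B.inc e ⊆ B.V := B.inc_sub e he
    rcases hedge e he with ⟨hw, _⟩ | ⟨hw, _⟩
    · -- edge in W₁: the element b outside X must be vs
      have hbW₁ : b ∈ W₁ := hw hb1
      have hbB : b ∈ B.V := hincB hb1
      by_cases hbvs : b = vs
      · exact hbvs ▸ hbB
      · exact absurd (Finset.mem_inter.mpr ⟨hbB,
          Finset.mem_erase.mpr ⟨hbvs, hbW₁⟩⟩) hb2
    · -- edge in W₂: but a ∈ X ⊆ W₁ \ {vs}, contradiction
      have haW₂ : a ∈ W₂ := hw ha1
      rcases Finset.mem_erase.mp (Finset.mem_inter.mp ha2).2 with ⟨havs, haW₁⟩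
      exact absurd (W₁_W₂_inter hm haW₁ haW₂) havs
  -- vs separates B
  apply hnosep
  refine ⟨vs, B.V ∩ W₁, B.V ∩ W₂, ?_, ?_, ?_, ?_, ?_⟩
  · rw [← Finset.inter_union_distrib_left, hHV]
    exact Finset.inter_eq_left.mpr hBV
  · apply Finset.Subset.antisymm
    · intro z hz
      simp only [Finset.mem_inter] at hz
      exact Finset.mem_singleton.mpr (W₁_W₂_inter hm hz.1.2 hz.2.2)
    · intro z hz
      rw [Finset.mem_singleton] at hz
      subst hz
      exact Finset.mem_inter.mpr ⟨Finset.mem_inter.mpr ⟨hvsB, Finset.mem_insert_self _ _⟩,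
        Finset.mem_inter.mpr ⟨hvsB, Finset.mem_insert_self _ _⟩⟩
  · have hpair : ({y, vs} : Finset ℕ) ⊆ B.V ∩ W₁ := by
      intro z hz
      rcases Finset.mem_insert.mp hz with rfl | hz
      · exact Finset.mem_inter.mpr ⟨hyB, hyW₁⟩
      · rw [Finset.mem_singleton] at hz
        subst hz
        exact Finset.mem_inter.mpr ⟨hvsB, Finset.mem_insert_self _ _⟩
    calc 2 = ({y, vs} : Finset ℕ).card := (Finset.card_pair hyvs).symm
      _ ≤ _ := Finset.card_le_card hpair
  · have hpair : ({x, vs} : Finset ℕ) ⊆ B.V ∩ W₂ := by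
      intro z hz
      rcases Finset.mem_insert.mp hz with rfl | hz
      · exact Finset.mem_inter.mpr ⟨hxB, hxW₂⟩
      · rw [Finset.mem_singleton] at hz
        subst hz
        exact Finset.mem_inter.mpr ⟨hvsB, Finset.mem_insert_self _ _⟩
    calc 2 = ({x, vs} : Finset ℕ).card := (Finset.card_pair hxvs).symm
      _ ≤ _ := Finset.card_le_card hpair
  · intro e he
    have hincB : B.inc e ⊆ B.V := B.inc_sub e he
    rcases hedge e he with ⟨hw, _⟩ | ⟨hw, _⟩
    · exact Or.inl (Finset.subset_inter hincB hw)
    · exact Or.inr (Finset.subset_inter hincB hw)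

end Merge

lemma card_merge {H H₁ H₂ : NatHypergraph} {v₁ v₂ vs : ℕ}
    (hm : H.IsMergeOf H₁ H₂ v₁ v₂ vs) :
    H.V.card = H₁.V.card - 1 + (H₂.V.card - 1) + 1 := by
  have hvs1 : vs ∉ H₁.V.erase v₁ := fun h =>
    (Finset.mem_erase.mp h).1 (vs_mem_V₁ hm (Finset.mem_erase.mp h).2)
  have hvs2 : vs ∉ H₂.V.erase v₂ := fun h =>
    (Finset.mem_erase.mp h).1 (vs_mem_V₁ (mergeOf_symm hm) (Finset.mem_erase.mp h).2)
  have hdis : Disjoint (H₁.V.erase v₁) (H₂.V.erase v₂) :=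
    Finset.disjoint_of_subset_left (Finset.erase_subset _ _)
      (Finset.disjoint_of_subset_right (Finset.erase_subset _ _) hm.1)
  rw [hv_eq hm, Finset.card_insert_of_notMem (by
      intro h
      rcases Finset.mem_union.mp h with h | h
      · exact hvs1 h
      · exact hvs2 h),
    Finset.card_union_of_disjoint hdis,
    Finset.card_erase_of_mem hm.2.2.1, Finset.card_erase_of_mem hm.2.2.2.1]

lemma one_vertex_zero {p : ℕ} {H : NatHypergraph} {f : Fin p → ℕ → ℕ}
    (hhard : NatHypergraph.HardPair p H f) :
    H.V.card = 1 → ∀ i, ∀ v ∈ H.V, f i v = 0 := by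
  induction hhard with
  | mono H f j hconn hnosep hfj hfi =>
    intro hcard i v hv
    have hE : ∀ e, e ∉ H.E := by
      intro e he
      have h2 := H.inc_card e he
      have h3 := Finset.card_le_card (H.inc_sub e he)
      omega
    by_cases hij : i = j
    · subst hij
      rw [hfj v hv]
      unfold NatHypergraph.deg
      rw [Finset.card_eq_zero, Finset.eq_empty_iff_forall_notMem]
      intro e he
      exact hE e (Finset.mem_filter.mp he).1
    · exact hfi i hij v hv
  | complete H f t n nn ht hn hcomp hconn hnn hsum hf =>
    intro hcard
    rw [hcomp.1] at hcard
    omega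
  | cycle H f t n k l ht hn hodd hcyc hconn hkl hfkl hf0 =>
    intro hcard
    obtain ⟨h3, c, hcinj, hVeq, _⟩ := hcyc
    have : H.V.card = n := by
      rw [hVeq, Finset.card_image_of_injOn, Finset.card_range]
      intro a ha b hb hab
      exact hcinj a b (Finset.mem_range.mp ha) (Finset.mem_range.mp hb) hab
    omega
  | merge H H₁ H₂ f f₁ f₂ v₁ v₂ vs h₁ h₂ hm hfs hfa hfb ih₁ ih₂ =>
    intro hcard i v hv
    have hc := card_merge hm
    have hc₁ : 1 ≤ H₁.V.card := Finset.card_pos.mpr ⟨v₁, hm.2.2.1⟩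
    have hc₂ : 1 ≤ H₂.V.card := Finset.card_pos.mpr ⟨v₂, hm.2.2.2.1⟩
    have h1 : H₁.V.card = 1 := by omega
    have h2 : H₂.V.card = 1 := by omega
    have hv_vs : v = vs := by
      have hvs : vs ∈ H.V := by
        rw [hv_eq hm]; exact Finset.mem_insert_self _ _
      have := Finset.card_le_one.mp (le_of_eq hcard) v hv vs hvs
      exact this
    rw [hv_vs, hfs i, ih₁ h1 i v₁ hm.2.2.1, ih₂ h2 i v₂ hm.2.2.2.1]


/-- The main statement, as a property of a pair. -/
def Concl {p : ℕ} (f : Fin p → ℕ → ℕ) (u u' : ℕ) : Prop :=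
  (∀ i, f i u = f i u') ∨ ∃ j : Fin p, ∀ i, i ≠ j → f i u = 0 ∧ f i u' = 0

lemma merge_side {p : ℕ} {H H₁ H₂ : NatHypergraph} {f f₁ f₂ : Fin p → ℕ → ℕ}
    {v₁ v₂ vs : ℕ}
    (hm : H.IsMergeOf H₁ H₂ v₁ v₂ vs)
    (hfs : ∀ i, f i vs = f₁ i v₁ + f₂ i v₂)
    (hfa : ∀ i, ∀ v ∈ H₁.V, v ≠ v₁ → f i v = f₁ i v)
    (IH : ∀ B : NatHypergraph, B.IsSub H₁ → B.Connected → (¬ ∃ v, B.Separating v) →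
      ∀ u u', u ∈ B.V → u' ∈ B.V → u ≠ u' → ¬ H₁.Separating u →
      ¬ H₁.Separating u' → Concl f₁ u u')
    (B : NatHypergraph) (hsub : B.IsSub H) (hconn : B.Connected)
    (hnosep : ¬ ∃ v, B.Separating v)
    (u u' : ℕ) (hu : u ∈ B.V) (hu' : u' ∈ B.V) (hne : u ≠ u')
    (hus : ¬ H.Separating u) (hu's : ¬ H.Separating u')
    (hside : B.V ⊆ insert vs (H₁.V.erase v₁))
    (hz : (u = vs ∨ u' = vs) → ∀ i, f₂ i v₂ = 0) :
    Concl f u u' := by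
  set σ : ℕ ≃ ℕ := Equiv.swap v₁ vs with hσ
  set B₁ : NatHypergraph := relabel σ B with hB₁
  -- B.E ⊆ H₁.E
  have hBE₁ : B.E ⊆ H₁.E := by
    intro e he
    have heH : e ∈ H.E := hsub.2.1 he
    have heE : e ∈ H₁.E ∪ H₂.E := hm.2.2.2.2.2.2.1 ▸ heH
    rcases Finset.mem_union.mp heE with he1 | he2
    · exact he1
    · exfalso
      have hincB : B.inc e = H.inc e := hsub.2.2 e he
      have h1 : B.inc e ⊆ B.V := B.inc_sub e he
      have h2 : B.inc e ⊆ insert vs (H₂.V.erase v₂) := hincB ▸ inc_sub_W₂ hm he2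
      have h3 : B.inc e ⊆ {vs} := by
        intro x hx
        exact Finset.mem_singleton.mpr
          (W₁_W₂_inter hm (hside (h1 hx)) (h2 hx))
      have h4 := Finset.card_le_card h3
      have h5 := B.inc_card e he
      simp only [Finset.card_singleton] at h4
      omega
  have himg : ∀ e ∈ B.E, B₁.inc e = H₁.inc e := by
    intro e he
    show (B.inc e).image ⇑σ = H₁.inc e
    rw [hsub.2.2 e he, inc_eq_image hm (hBE₁ he), hσ]
    exact swap_swap_image v₁ vs _
  have hVsub : B₁.V ⊆ H₁.V := by
    show B.V.image ⇑σ ⊆ H₁.V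
    have h1 : B.V.image ⇑σ ⊆ (insert vs (H₁.V.erase v₁)).image ⇑σ :=
      Finset.image_subset_image hside
    have h2 : (insert vs (H₁.V.erase v₁)).image ⇑σ = H₁.V := by
      rw [← image_V₁ hm]
      exact swap_swap_image v₁ vs _
    exact h2 ▸ h1
  have hsub₁ : B₁.IsSub H₁ := ⟨hVsub, hBE₁, himg⟩
  have hconn₁ : B₁.Connected := relabel_connected σ B hconn
  have hnosep₁ : ¬ ∃ v, B₁.Separating v := fun ⟨w, hw⟩ =>
    hnosep ⟨σ.symm w, relabel_sep σ B w hw⟩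
  have hmemu : σ u ∈ B₁.V := Finset.mem_image_of_mem _ hu
  have hmemu' : σ u' ∈ B₁.V := Finset.mem_image_of_mem _ hu'
  have hneq : σ u ≠ σ u' := fun h => hne (σ.injective h)
  have hsep_tr : ∀ x, ¬ H.Separating x → ¬ H₁.Separating (σ x) := by
    intro x hx h
    apply hx
    have := sep_transfer hm h
    rwa [hσ, Equiv.swap_apply_self] at this
  have hus₁ : ¬ H₁.Separating (σ u) := hsep_tr u hus
  have hu's₁ : ¬ H₁.Separating (σ u') := hsep_tr u' hu's
  have hfval : ∀ x ∈ B.V, (x = vs → ∀ i, f₂ i v₂ = 0) → ∀ i, f i x = f₁ i (σ x) := by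
    intro x hx hxz i
    by_cases hxvs : x = vs
    · subst hxvs
      have hσx : σ x = v₁ := Equiv.swap_apply_right v₁ x
      rw [hσx, hfs i, hxz rfl i, Nat.add_zero]
    · have hxW : x ∈ insert vs (H₁.V.erase v₁) := hside hx
      rcases Finset.mem_insert.mp hxW with h | h
      · exact absurd h hxvs
      rcases Finset.mem_erase.mp h with ⟨hxv₁, hxV₁⟩
      have hσx : σ x = x := Equiv.swap_apply_of_ne_of_ne hxv₁ hxvs
      rw [hσx]
      exact hfa i x hxV₁ hxv₁
  have hfu : ∀ i, f i u = f₁ i (σ u) :=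
    hfval u hu (fun h => hz (Or.inl h))
  have hfu' : ∀ i, f i u' = f₁ i (σ u') :=
    hfval u' hu' (fun h => hz (Or.inr h))
  rcases IH B₁ hsub₁ hconn₁ hnosep₁ (σ u) (σ u') hmemu hmemu' hneq hus₁ hu's₁ with
    hL | ⟨j, hj⟩
  · left
    intro i
    rw [hfu i, hfu' i, hL i]
  · right
    refine ⟨j, fun i hij => ?_⟩
    rw [hfu i, hfu' i]
    exact hj i hij

lemma main {p : ℕ} {H : NatHypergraph} {f : Fin p → ℕ → ℕ}
    (hhard : NatHypergraph.HardPair p H f) :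
    ∀ B : NatHypergraph, B.IsSub H → B.Connected → (¬ ∃ v, B.Separating v) →
      ∀ u u', u ∈ B.V → u' ∈ B.V → u ≠ u' → ¬ H.Separating u →
      ¬ H.Separating u' → Concl f u u' := by
  induction hhard with
  | mono H f j hcon hnosep hfj hfi =>
    intro B hsub _ _ u u' hu hu' _ _ _
    exact Or.inr ⟨j, fun i hij =>
      ⟨hfi i hij u (hsub.1 hu), hfi i hij u' (hsub.1 hu')⟩⟩
  | complete H f t n nn ht hn hcomp hcon hnn hsum hf =>
    intro B hsub _ _ u u' hu hu' _ _ _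
    left
    intro i
    rw [hf i u (hsub.1 hu), hf i u' (hsub.1 hu')]
  | cycle H f t n k l ht hn hodd hcyc hcon hkl hfkl hf0 =>
    intro B hsub _ _ u u' hu hu' _ _ _
    left
    intro i
    by_cases hik : i = k
    · subst hik
      rw [(hfkl u (hsub.1 hu)).1, (hfkl u' (hsub.1 hu')).1]
    by_cases hil : i = l
    · subst hil
      rw [(hfkl u (hsub.1 hu)).2, (hfkl u' (hsub.1 hu')).2]
    · rw [hf0 i hik hil u (hsub.1 hu), hf0 i hik hil u' (hsub.1 hu')]
  | merge H H₁ H₂ f f₁ f₂ v₁ v₂ vs h₁ h₂ hm hfs hfa hfb ih₁ ih₂ =>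
    intro B hsub hconn hnosep u u' hu hu' hne hus hu's
    have hcard_side : ∀ W : Finset ℕ, B.V ⊆ W → 2 ≤ W.card := by
      intro W hW
      have hpair : ({u, u'} : Finset ℕ) ⊆ W := by
        intro z hz
        rcases Finset.mem_insert.mp hz with rfl | hz
        · exact hW hu
        · rw [Finset.mem_singleton] at hz
          exact hz ▸ hW hu'
      calc 2 = ({u, u'} : Finset ℕ).card := (Finset.card_pair hne).symm
        _ ≤ _ := Finset.card_le_card hpair
    have hWcard : ∀ (V : Finset ℕ) (w : ℕ), w ∈ V →
        2 ≤ (insert vs (V.erase w)).card → 2 ≤ V.card := by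
      intro V w hw h
      have h1 := Finset.card_insert_le vs (V.erase w)
      have h2 := Finset.card_erase_of_mem hw
      have h3 := Finset.card_pos.mpr ⟨w, hw⟩
      omega
    rcases side_of hm B hsub hconn hnosep with hside | hside
    · -- B on the H₁ side
      have hV₁2 : 2 ≤ H₁.V.card := hWcard _ _ hm.2.2.1 (hcard_side _ hside)
      have hz : (u = vs ∨ u' = vs) → ∀ i, f₂ i v₂ = 0 := by
        intro hor i
        have hvs_nonsep : ¬ H.Separating vs := by
          rcases hor with rfl | rfl
          · exact hus
          · exact hu's
        have hV₂1 : H₂.V.card = 1 := by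
          by_contra hc
          have h1 : 1 ≤ H₂.V.card := Finset.card_pos.mpr ⟨v₂, hm.2.2.2.1⟩
          have h2 : 2 ≤ H₂.V.card := by omega
          exact hvs_nonsep (vs_separating hm hV₁2 h2)
        exact one_vertex_zero h₂ hV₂1 i v₂ hm.2.2.2.1
      exact merge_side hm hfs hfa ih₁ B hsub hconn hnosep u u' hu hu' hne hus hu's
        hside hz
    · -- B on the H₂ side
      have hm' := mergeOf_symm hm
      have hV₂2 : 2 ≤ H₂.V.card := hWcard _ _ hm.2.2.2.1 (hcard_side _ hside)
      have hfs' : ∀ i, f i vs = f₂ i v₂ + f₁ i v₁ := fun i => by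
        rw [hfs i, Nat.add_comm]
      have hz : (u = vs ∨ u' = vs) → ∀ i, f₁ i v₁ = 0 := by
        intro hor i
        have hvs_nonsep : ¬ H.Separating vs := by
          rcases hor with rfl | rfl
          · exact hus
          · exact hu's
        have hV₁1 : H₁.V.card = 1 := by
          by_contra hc
          have h1 : 1 ≤ H₁.V.card := Finset.card_pos.mpr ⟨v₁, hm.2.2.1⟩
          have h2 : 2 ≤ H₁.V.card := by omega
          exact hvs_nonsep (vs_separating hm h2 hV₂2)
        exact one_vertex_zero h₁ hV₁1 i v₁ hm.2.2.1
      exact merge_side hm' hfs' hfb ih₂ B hsub hconn hnosep u u' hu hu' hne hus hu's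
        hside hz

end HPAux

end Aux

theorem hardPair_nonseparating_vertices {p : ℕ} (H : NatHypergraph)
    (f : Fin p → ℕ → ℕ)
    (hconn : H.Connected) (hhard : NatHypergraph.HardPair p H f)
    (B : NatHypergraph) (hB : B.IsBlockOf H)
    (u u' : ℕ) (hu : u ∈ B.V) (hu' : u' ∈ B.V) (hne : u ≠ u')
    (husep : ¬ H.Separating u) (hu'sep : ¬ H.Separating u') :
    (∀ i, f i u = f i u') ∨
      ∃ j : Fin p, ∀ i, i ≠ j → f i u = 0 ∧ f i u' = 0 := by
  exact HPAux.main hhard B hB.1 hB.2.1 hB.2.2.1 u u' hu hu' hne husep hu'sep
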